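/- Let (ζ_i)_{i≥1} be any sequence in [0,1) and (γ_i)_{i≥1} any sequence in (1,∞), and suppose there is a constant γ₀ > 1 with γ_i ≥ γ₀ for all i ≥ 1. Set M_i := M(ζ_i,γ_i) and (L̃_k, R̃_k) := (1,1)·M_1·M_2⋯M_{k−1} for k ≥ 2. Then L̃_k → +∞ as k → ∞ (and consequently L̃_k + R̃_k → +∞). -/

import Mathlib

open Matrix Filter

/-- The transfer matrix `M(ζ,γ) = (1/((1+ζ)γ)) · [[γ², ζγ²],[ζ, 1]]`. -/
noncomputable def Mmat (ζ γ : ℝ) : Matrix (Fin 2) (Fin 2) ℝ :=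
  (((1 + ζ) * γ)⁻¹) • !![γ ^ 2, ζ * γ ^ 2; ζ, 1]

/-- The forward product `M_1 · M_2 ⋯ M_{k-1}`. -/
noncomputable def forwardProd (ζ γ : ℕ → ℝ) (k : ℕ) : Matrix (Fin 2) (Fin 2) ℝ :=
  ((List.range (k - 1)).map (fun i => Mmat (ζ (i + 1)) (γ (i + 1)))).prod

/-- `L̃_k` : first entry of the row vector `(1,1) · M_1 ⋯ M_{k-1}`. -/
noncomputable def Ltil (ζ γ : ℕ → ℝ) (k : ℕ) : ℝ :=
  Matrix.vecMul ![1, 1] (forwardProd ζ γ k) 0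

/-- `R̃_k` : second entry of the row vector `(1,1) · M_1 ⋯ M_{k-1}`. -/
noncomputable def Rtil (ζ γ : ℕ → ℝ) (k : ℕ) : ℝ :=
  Matrix.vecMul ![1, 1] (forwardProd ζ γ k) 1

lemma vecMul_Mmat (u : Fin 2 → ℝ) (z g : ℝ) :
    Matrix.vecMul u (Mmat z g) =
      ![(g ^ 2 * u 0 + z * u 1) * (((1 + z) * g)⁻¹),
        (z * g ^ 2 * u 0 + u 1) * (((1 + z) * g)⁻¹)] := by
  funext i
  fin_cases i <;>
  · simp [Mmat, Matrix.vecMul, dotProduct, Fin.sum_univ_two]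
    ring

lemma forwardProd_succ (ζ γ : ℕ → ℝ) (n : ℕ) :
    forwardProd ζ γ (n + 2) = forwardProd ζ γ (n + 1) * Mmat (ζ (n + 1)) (γ (n + 1)) := by
  simp [forwardProd, List.range_succ]

set_option maxHeartbeats 1000000 in
/-- If `(ζ_i)_{i≥1} ⊆ [0,1)`, `(γ_i)_{i≥1} ⊆ (1,∞)` with `γ_i ≥ γ₀ > 1` uniformly, then
`L̃_k → +∞` (and consequently `L̃_k + R̃_k → +∞`) as `k → ∞`. -/
theorem stmt1 (ζ γ : ℕ → ℝ) (γ₀ : ℝ) (hγ₀ : 1 < γ₀)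
    (hζ : ∀ i, 1 ≤ i → 0 ≤ ζ i ∧ ζ i < 1)
    (hγ : ∀ i, 1 ≤ i → 1 < γ i)
    (hγbd : ∀ i, 1 ≤ i → γ₀ ≤ γ i) :
    Tendsto (fun k => Ltil ζ γ k) atTop atTop ∧
    Tendsto (fun k => Ltil ζ γ k + Rtil ζ γ k) atTop atTop := by
  have hγ₀pos : (0:ℝ) < γ₀ := by linarith
  set c : ℝ := (γ₀ ^ 2 + 1) / (2 * γ₀) with hc_def
  have hcprop : c * (2 * γ₀) = γ₀ ^ 2 + 1 := by
    rw [hc_def, div_mul_cancel₀]; positivity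
  have hc : 1 < c := by
    rw [hc_def, lt_div_iff₀ (by linarith)]
    nlinarith
  have hcpos : (0:ℝ) < c := by linarith
  clear_value c
  -- the key invariant
  have key : ∀ n : ℕ, 0 ≤ Rtil ζ γ (n + 1) ∧ Rtil ζ γ (n + 1) ≤ Ltil ζ γ (n + 1) ∧
      2 * c ^ n ≤ Ltil ζ γ (n + 1) + Rtil ζ γ (n + 1) := by
    intro n
    induction n with
    | zero =>
      simp [Ltil, Rtil, forwardProd]
      norm_num
    | succ n ih =>
      obtain ⟨hR0, hRL, hS⟩ := ih
      obtain ⟨hz0, hz1⟩ := hζ (n + 1) (by omega)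
      have hg1 : 1 < γ (n + 1) := hγ (n + 1) (by omega)
      have hgbd : γ₀ ≤ γ (n + 1) := hγbd (n + 1) (by omega)
      set L := Ltil ζ γ (n + 1) with hL_def
      set R := Rtil ζ γ (n + 1) with hR_def
      set z := ζ (n + 1) with hz_def
      set g := γ (n + 1) with hg_def
      clear_value L R z g
      have hgpos : (0:ℝ) < g := by linarith
      have hdpos : (0:ℝ) < (1 + z) * g := by positivity
      have hL0 : 0 ≤ L := le_trans hR0 hRL
      have hvm := vecMul_Mmat (Matrix.vecMul ![1, 1] (forwardProd ζ γ (n + 1))) z g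
      have hL' : Ltil ζ γ (n + 2) = (g ^ 2 * L + z * R) * (((1 + z) * g)⁻¹) := by
        rw [Ltil, forwardProd_succ, ← Matrix.vecMul_vecMul, ← hz_def, ← hg_def, hvm]
        simp only [Matrix.cons_val_zero]
        rw [hL_def, hR_def, Ltil, Rtil]
      have hR' : Rtil ζ γ (n + 2) = (z * g ^ 2 * L + R) * (((1 + z) * g)⁻¹) := by
        rw [Rtil, forwardProd_succ, ← Matrix.vecMul_vecMul, ← hz_def, ← hg_def, hvm]
        simp only [Matrix.cons_val_one, Matrix.head_cons, Matrix.cons_val_zero]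
        rw [hL_def, hR_def, Ltil, Rtil]
      have hinv : 0 < (((1 + z) * g)⁻¹) := inv_pos.mpr hdpos
      refine ⟨?_, ?_, ?_⟩
      · rw [hR']
        have h : 0 ≤ z * g ^ 2 * L + R :=
          add_nonneg (mul_nonneg (mul_nonneg hz0 (sq_nonneg g)) hL0) hR0
        exact mul_nonneg h hinv.le
      · rw [hL', hR']
        have hg2 : (1:ℝ) ≤ g ^ 2 := by nlinarith
        have hb : R ≤ g ^ 2 * L := hRL.trans (le_mul_of_one_le_left hL0 hg2)
        have hnum : z * g ^ 2 * L + R ≤ g ^ 2 * L + z * R := by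
          nlinarith [mul_nonneg (by linarith : (0:ℝ) ≤ 1 - z) (by linarith : (0:ℝ) ≤ g ^ 2 * L - R)]
        exact mul_le_mul_of_nonneg_right hnum hinv.le
      · rw [hL', hR']
        have hsum : (g ^ 2 * L + z * R) * (((1 + z) * g)⁻¹)
            + (z * g ^ 2 * L + R) * (((1 + z) * g)⁻¹)
            = (g ^ 2 * L + R) / g := by
          field_simp
          ring
        rw [hsum, le_div_iff₀ hgpos]
        -- need  2 * c^(n+1) * g ≤ g² L + R
        have h2gc : 2 * g * c ≤ g ^ 2 + 1 := by
          have hfac : 0 ≤ (g - γ₀) * (g * γ₀ - 1) := by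
            have h1 : (0:ℝ) ≤ g - γ₀ := by linarith
            have h2 : (0:ℝ) ≤ g * γ₀ - 1 := by nlinarith [mul_nonneg (by linarith : (0:ℝ) ≤ g - 1) (by linarith : (0:ℝ) ≤ γ₀ - 1)]
            exact mul_nonneg h1 h2
          nlinarith [hγ₀pos, hcprop]
        have h1 : 0 ≤ (g ^ 2 - 1) * (L - R) := by
          have hg2 : (1:ℝ) ≤ g ^ 2 := by nlinarith
          exact mul_nonneg (by linarith) (by linarith)
        have hSpos : 0 ≤ L + R := by linarith [pow_pos hcpos n]
        have hstep : c * (L + R) * g ≤ g ^ 2 * L + R := by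
          nlinarith [mul_nonneg (sub_nonneg.2 h2gc) hSpos]
        have hpowpos : 0 < c ^ n := pow_pos hcpos n
        calc 2 * c ^ (n + 1) * g = (2 * c ^ n) * (c * g) := by ring
          _ ≤ (L + R) * (c * g) := by
              apply mul_le_mul_of_nonneg_right hS (by positivity)
          _ = c * (L + R) * g := by ring
          _ ≤ g ^ 2 * L + R := hstep
  have hLlb : ∀ k, 1 ≤ k → c ^ (k - 1) ≤ Ltil ζ γ k := by
    intro k hk
    obtain ⟨n, rfl⟩ : ∃ n, k = n + 1 := ⟨k - 1, by omega⟩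
    obtain ⟨hR0, hRL, hS⟩ := key n
    simp only [Nat.add_sub_cancel]
    linarith
  have hSlb : ∀ k, 1 ≤ k → c ^ (k - 1) ≤ Ltil ζ γ k + Rtil ζ γ k := by
    intro k hk
    obtain ⟨n, rfl⟩ : ∃ n, k = n + 1 := ⟨k - 1, by omega⟩
    obtain ⟨hR0, hRL, hS⟩ := key n
    simp only [Nat.add_sub_cancel]
    nlinarith [pow_pos hcpos n]
  have hpow : Tendsto (fun k : ℕ => c ^ (k - 1)) atTop atTop :=
    (tendsto_pow_atTop_atTop_of_one_lt hc).comp (tendsto_sub_atTop_nat 1)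
  constructor
  · refine tendsto_atTop_mono' atTop ?_ hpow
    filter_upwards [eventually_ge_atTop 1] with k hk
    exact hLlb k hk
  · refine tendsto_atTop_mono' atTop ?_ hpow
    filter_upwards [eventually_ge_atTop 1] with k hk
    exact hSlb k hk
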